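/- For the DRB game on the k-dimensional grid, there exists a constant κ > 0 (depending only on k and the granularity γ) such that for all n ≥ max(e^4, 2k): for any strategy profile r and any node u with r_u ≠ k, the payoff satisfies π_u(r) ≤ κ · n^{1−γ}. In particular one may take κ = (ξ_k^+)^2 · 2^{2k+7} · k^{k+4} / (γ · (ξ_k^−)^3), where ξ_k^−, ξ_k^+ are constants as in the context. -/

import Mathlib

open Finset

noncomputable section

namespace DRB

/-- Nodes of the `k`-dimensional grid (torus) with side length `n`. -/
abbrev Node (n k : ℕ) := Fin k → Fin n

/-- Grid (Manhattan) distance on the torus: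
`d_M(u,v) = Σ_i min(|u_i - v_i|, n - |u_i - v_i|)`. -/
def dM (n k : ℕ) (u v : Node n k) : ℕ :=
  ∑ i, min ((u i : ℤ) - (v i : ℤ)).natAbs (n - ((u i : ℤ) - (v i : ℤ)).natAbs)

/-- All nodes different from `u`. -/
def others (n k : ℕ) (u : Node n k) : Finset (Node n k) :=
  Finset.univ.filter (fun v => v ≠ u)

/-- Normalization constant `c(s) = Σ_{v ≠ u} d_M(u,v)^{-s}` for node `u`. -/
def cnorm (n k : ℕ) (u : Node n k) (s : ℝ) : ℝ :=
  ∑ v ∈ others n k u, (dM n k u v : ℝ) ^ (-s)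

/-- Long-range link probability `p_u(v, s) = d_M(u,v)^{-s} / c(s)`. -/
def linkProb (n k : ℕ) (u v : Node n k) (s : ℝ) : ℝ :=
  (dM n k u v : ℝ) ^ (-s) / cnorm n k u s

/-- Link distance `D(s) = Σ_{v ≠ u} p_u(v,s) · d_M(u,v)` of node `u`. -/
def linkDist (n k : ℕ) (u : Node n k) (s : ℝ) : ℝ :=
  ∑ v ∈ others n k u, linkProb n k u v s * (dM n k u v : ℝ)

/-- Reciprocity `P_u(r) = Σ_{v ≠ u} p_u(v, r_u) · p_v(u, r_v)`. -/
def recip (n k : ℕ) (r : Node n k → ℝ) (u : Node n k) : ℝ :=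
  ∑ v ∈ others n k u, linkProb n k u v (r u) * linkProb n k v u (r v)

/-- DRB payoff `π_u(r) = D(r_u) · P_u(r)`. -/
def payoff (n k : ℕ) (r : Node n k → ℝ) (u : Node n k) : ℝ :=
  linkDist n k u (r u) * recip n k r u

/-- Membership in the strategy set `Σ = {0, γ, 2γ, 3γ, ...}`. -/
def InSigma (γ s : ℝ) : Prop := ∃ m : ℕ, s = m * γ

/-- A valid strategy profile (every coordinate lies in `Σ`). -/
def ValidProfile (n k : ℕ) (γ : ℝ) (r : Node n k → ℝ) : Prop :=
  ∀ u, InSigma γ (r u)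

/-- Nash equilibrium of the DRB game with strategy set `Σ` of granularity `γ`. -/
def IsNash (n k : ℕ) (γ : ℝ) (r : Node n k → ℝ) : Prop :=
  ∀ u : Node n k, ∀ s : ℝ, InSigma γ s →
    payoff n k r u ≥ payoff n k (Function.update r u s) u

/-- Strict Nash equilibrium. -/
def IsStrictNash (n k : ℕ) (γ : ℝ) (r : Node n k → ℝ) : Prop :=
  ∀ u : Node n k, ∀ s : ℝ, InSigma γ s → s ≠ r u →
    payoff n k r u > payoff n k (Function.update r u s) u

/-- `t`-strong Nash equilibrium: no coalition of size ≤ `t` has a weakly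
improving joint deviation that strictly improves some member. -/
def IsTStrongNash (n k : ℕ) (γ : ℝ) (t : ℕ) (r : Node n k → ℝ) : Prop :=
  ¬ ∃ (C : Finset (Node n k)) (s : Node n k → ℝ),
      C.Nonempty ∧ C.card ≤ t ∧ (∀ u ∈ C, InSigma γ (s u)) ∧
      (∀ u ∈ C,
        payoff n k (fun v => if v ∈ C then s v else r v) u ≥ payoff n k r u) ∧
      (∃ u ∈ C,
        payoff n k (fun v => if v ∈ C then s v else r v) u > payoff n k r u)

/-- Strong Nash equilibrium: coalitions of any size. -/
def IsStrongNash (n k : ℕ) (γ : ℝ) (r : Node n k → ℝ) : Prop :=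
  ¬ ∃ (C : Finset (Node n k)) (s : Node n k → ℝ),
      C.Nonempty ∧ (∀ u ∈ C, InSigma γ (s u)) ∧
      (∀ u ∈ C,
        payoff n k (fun v => if v ∈ C then s v else r v) u ≥ payoff n k r u) ∧
      (∃ u ∈ C,
        payoff n k (fun v => if v ∈ C then s v else r v) u > payoff n k r u)

/-- `b_u(j)`: the number of nodes at grid distance exactly `j` from `u`. -/
def countAt (n k : ℕ) (u : Node n k) (j : ℕ) : ℕ :=
  (Finset.univ.filter (fun v => v ≠ u ∧ dM n k u v = j)).card

/-- One asynchronous best-response step: a single node switches to a best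
response to the current profile, all other strategies unchanged. -/
def BRStep (n k : ℕ) (γ : ℝ) (r r' : Node n k → ℝ) : Prop :=
  ∃ (u : Node n k) (s : ℝ), InSigma γ s ∧
    (∀ t : ℝ, InSigma γ t →
      payoff n k (Function.update r u s) u ≥ payoff n k (Function.update r u t) u) ∧
    r' = Function.update r u s

/-- One synchronous best-response step: every node simultaneously switches
to a best response to the current profile `r`. -/
def SyncStep (n k : ℕ) (γ : ℝ) (r r' : Node n k → ℝ) : Prop :=
  ∀ u : Node n k, InSigma γ (r' u) ∧
    ∀ t : ℝ, InSigma γ t →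
      payoff n k (Function.update r u (r' u)) u ≥
        payoff n k (Function.update r u t) u

end DRB

/-!
Write `γ = 1/g` and `s = r_u`. The link distance is at most the diameter `k⌊n/2⌋`, so everything
rests on the reciprocity. Because strategies lie on the lattice `γℕ`, a partner `v` plays either
`r_v ≤ k - γ`, and then `c_v(r_v) ≥ ξ⁻ n^γ / 4` makes `p_v(u) ≤ 4 / (ξ⁻ n^γ)`, or `r_v ≥ k`,
and then `p_v(u) ≤ d(u,v)^(-k) / ξ⁻`. Summing shell by shell with `b_u(j) ≤ ξ⁺ j^(k-1)` turns
`∑_v p_u(v) d(u,v)^(-k)` into `ξ⁺ ∑_j j^(-1-s) / c_u(s)`. As `s ≠ k`, three cases remain: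
for `s = 0` the normaliser `c_u(0) = n^k - 1` is huge; for `γ ≤ s ≤ k - γ` the series
`∑ j^(-1-s)` converges while `c_u(s) ≳ n^γ`; for `s ≥ k + γ` one uses `P_u ≤ 1` and
`D(s) ≲ ∑_{j ≤ kn} j^(-γ) ≲ n^(1-γ)`. The power sums are bounded by telescoping.
-/

section RpowSums

variable {p x : ℝ}

lemma mul_rpow_sub_one_le_rpow_add_one_sub (hp0 : 0 ≤ p) (hp1 : p ≤ 1) (hx : 0 ≤ x) :
    p * (x + 1) ^ (p - 1) ≤ (x + 1) ^ p - x ^ p := by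
  have h := (Real.concaveOn_rpow hp0 hp1).le_slope_of_hasDerivAt (Set.mem_Ici.2 hx)
    (Set.mem_Ici.2 (by linarith)) (by linarith : x < x + 1)
    (Real.hasDerivAt_rpow_const (Or.inl (by linarith)))
  simpa [slope_def_field] using h

lemma mul_rpow_neg_sub_one_le_rpow_neg_sub (hp : 0 ≤ p) (hx : 0 < x) :
    p * (x + 1) ^ (-p - 1) ≤ x ^ (-p) - (x + 1) ^ (-p) := by
  obtain ⟨c, ⟨hxc, hcx⟩, hc⟩ := exists_hasDerivAt_eq_slope (fun t : ℝ => t ^ (-p))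
    (fun t => -p * t ^ (-p - 1)) (by linarith : x < x + 1)
    (fun t ht => (Real.continuousAt_rpow_const t (-p)
      (Or.inl (by linarith [ht.1]))).continuousWithinAt)
    (fun t ht => Real.hasDerivAt_rpow_const (Or.inl (by linarith [ht.1])))
  have hmono : (x + 1) ^ (-p - 1) ≤ c ^ (-p - 1) :=
    Real.rpow_le_rpow_of_nonpos (by linarith) hcx.le (by linarith)
  simp only [add_sub_cancel_left, div_one] at hc
  nlinarith

lemma sum_Icc_rpow_sub_one_le (hp0 : 0 < p) (hp1 : p ≤ 1) (M : ℕ) :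
    ∑ j ∈ Icc 1 M, (j : ℝ) ^ (p - 1) ≤ (M : ℝ) ^ p / p := by
  induction M with
  | zero => simp [Real.zero_rpow hp0.ne']
  | succ M ih =>
    have step : ((M : ℝ) + 1) ^ (p - 1) ≤ (((M : ℝ) + 1) ^ p - (M : ℝ) ^ p) / p := by
      rw [le_div_iff₀ hp0, mul_comm]
      exact mul_rpow_sub_one_le_rpow_add_one_sub hp0.le hp1 M.cast_nonneg
    rw [sum_Icc_succ_top (by omega), Nat.cast_succ]
    calc _ ≤ (M : ℝ) ^ p / p + (((M : ℝ) + 1) ^ p - (M : ℝ) ^ p) / p := add_le_add ih step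
      _ = ((M : ℝ) + 1) ^ p / p := by ring

lemma sum_Icc_rpow_neg_sub_one_le (hp : 0 < p) (M : ℕ) :
    ∑ j ∈ Icc 1 M, (j : ℝ) ^ (-p - 1) ≤ 1 + 1 / p := by
  -- telescoping against `j ↦ j ^ (-p) / p`, which is singular at `0`, so the sum starts at `j = 1`
  have key : ∀ M : ℕ, 1 ≤ M →
      ∑ j ∈ Icc 1 M, (j : ℝ) ^ (-p - 1) ≤ 1 + (1 - (M : ℝ) ^ (-p)) / p := by
    intro M hM
    induction M, hM using Nat.le_induction with
    | base => simp
    | succ M hM ih =>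
      have step : ((M : ℝ) + 1) ^ (-p - 1) ≤ ((M : ℝ) ^ (-p) - ((M : ℝ) + 1) ^ (-p)) / p := by
        rw [le_div_iff₀ hp, mul_comm]
        exact mul_rpow_neg_sub_one_le_rpow_neg_sub hp.le (by exact_mod_cast hM)
      rw [sum_Icc_succ_top (by omega), Nat.cast_succ]
      calc _ ≤ 1 + (1 - (M : ℝ) ^ (-p)) / p + ((M : ℝ) ^ (-p) - ((M : ℝ) + 1) ^ (-p)) / p :=
            add_le_add ih step
        _ = 1 + (1 - ((M : ℝ) + 1) ^ (-p)) / p := by ring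
  rcases Nat.eq_zero_or_pos M with rfl | hM
  · simp; positivity
  refine (key M hM).trans ?_
  gcongr
  linarith [Real.rpow_nonneg M.cast_nonneg (-p)]

lemma mul_rpow_div_pow_le_rpow {k : ℕ} (hx : 1 ≤ x) (hk : 1 ≤ k) (hp : p ≤ 1 / 2) :
    x * x ^ p / x ^ k ≤ x ^ (1 - p) := by
  have hx0 : 0 < x := by linarith
  have h : x * x ^ p = x ^ (1 + p) := by rw [Real.rpow_add hx0, Real.rpow_one]
  rw [div_le_iff₀ (by positivity), h, ← Real.rpow_natCast, ← Real.rpow_add hx0]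
  apply Real.rpow_le_rpow_of_exponent_le hx
  have : (1 : ℝ) ≤ k := by exact_mod_cast hk
  linarith

lemma cast_mul_half_rpow_le {n k : ℕ} (hk : 1 ≤ k) (hp0 : 0 ≤ p) (hp1 : p ≤ 1) :
    ((k * (n / 2) : ℕ) : ℝ) ^ p ≤ k * (n : ℝ) ^ p := by
  have hk' : (1 : ℝ) ≤ k := by exact_mod_cast hk
  calc ((k * (n / 2) : ℕ) : ℝ) ^ p ≤ ((k : ℝ) * n) ^ p := by
        gcongr; exact_mod_cast Nat.mul_le_mul_left k (Nat.div_le_self n 2)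
    _ = (k : ℝ) ^ p * (n : ℝ) ^ p := Real.mul_rpow (by positivity) (by positivity)
    _ ≤ k * (n : ℝ) ^ p := by
        gcongr; simpa using Real.rpow_le_rpow_of_exponent_le hk' hp1

end RpowSums

namespace DRB

variable {n k : ℕ}

lemma mem_others {u v : Node n k} : v ∈ others n k u ↔ v ≠ u := by
  simp [others]

lemma dM_comm (u v : Node n k) : dM n k u v = dM n k v u := by
  unfold dM
  congr! 2 with i <;> omega

lemma one_le_dM {u v : Node n k} (h : v ≠ u) : 1 ≤ dM n k u v := by
  obtain ⟨i, hi⟩ := Function.ne_iff.mp h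
  have hi' : (v i : ℕ) ≠ u i := Fin.val_injective.ne hi
  have := (u i).isLt
  have := (v i).isLt
  calc 1 ≤ min ((u i : ℤ) - (v i : ℤ)).natAbs (n - ((u i : ℤ) - (v i : ℤ)).natAbs) := by omega
    _ ≤ dM n k u v := single_le_sum (f := fun i => min ((u i : ℤ) - (v i : ℤ)).natAbs
        (n - ((u i : ℤ) - (v i : ℤ)).natAbs)) (fun _ _ => Nat.zero_le _) (mem_univ i)

lemma dM_le (u v : Node n k) : dM n k u v ≤ k * (n / 2) := by
  calc dM n k u v ≤ ∑ _i : Fin k, n / 2 := sum_le_sum fun i _ => by omega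
    _ = k * (n / 2) := by simp

lemma sum_others_eq_sum_countAt (u : Node n k) (f : ℕ → ℝ) :
    ∑ v ∈ others n k u, f (dM n k u v) =
      ∑ j ∈ Icc 1 (k * (n / 2)), (countAt n k u j : ℝ) * f j := by
  rw [← sum_fiberwise_of_maps_to (g := dM n k u) (t := Icc 1 (k * (n / 2)))
    fun v hv => mem_Icc.mpr ⟨one_le_dM (mem_others.mp hv), dM_le u v⟩]
  refine sum_congr rfl fun j _ => ?_
  rw [sum_congr rfl fun v hv => by rw [(mem_filter.mp hv).2], sum_const, nsmul_eq_mul, countAt,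
    others, filter_filter]

lemma cnorm_pos (hn : 2 ≤ n) (hk : 1 ≤ k) (u : Node n k) (s : ℝ) : 0 < cnorm n k u s := by
  obtain ⟨v, hv⟩ :=
    Fintype.exists_ne_of_one_lt_card (by simpa using Nat.one_lt_pow (by omega) hn) u
  refine sum_pos (fun w hw => Real.rpow_pos_of_pos ?_ _) ⟨v, mem_others.mpr hv⟩
  exact_mod_cast one_le_dM (mem_others.mp hw)

lemma cnorm_zero (u : Node n k) : cnorm n k u 0 = (n : ℝ) ^ k - 1 := by
  have h1 : 0 < n ^ k := by simpa using Fintype.card_pos_iff.mpr ⟨u⟩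
  simp only [cnorm, neg_zero, Real.rpow_zero, sum_const, nsmul_one, others, filter_ne',
    card_erase_of_mem (mem_univ u), card_univ, Fintype.card_fun, Fintype.card_fin]
  push_cast [Nat.one_le_iff_ne_zero.mpr h1.ne']
  ring

lemma linkProb_nonneg (u v : Node n k) (s : ℝ) : 0 ≤ linkProb n k u v s :=
  div_nonneg (Real.rpow_nonneg (Nat.cast_nonneg _) _) (sum_nonneg fun _ _ =>
    Real.rpow_nonneg (Nat.cast_nonneg _) _)

lemma sum_linkProb (hn : 2 ≤ n) (hk : 1 ≤ k) (u : Node n k) (s : ℝ) :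
    ∑ v ∈ others n k u, linkProb n k u v s = 1 := by
  simp only [linkProb, ← sum_div]
  exact div_self (cnorm_pos hn hk u s).ne'

lemma linkProb_le_one (hn : 2 ≤ n) (hk : 1 ≤ k) {u v : Node n k} (h : v ≠ u) (s : ℝ) :
    linkProb n k u v s ≤ 1 :=
  (single_le_sum (fun w _ => linkProb_nonneg u w s) (mem_others.mpr h)).trans
    (sum_linkProb hn hk u s).le

lemma recip_le_one (hn : 2 ≤ n) (hk : 1 ≤ k) (r : Node n k → ℝ) (u : Node n k) :
    recip n k r u ≤ 1 :=
  calc recip n k r u ≤ ∑ v ∈ others n k u, linkProb n k u v (r u) :=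
        sum_le_sum fun _ hv => mul_le_of_le_one_right (linkProb_nonneg _ _ _)
          (linkProb_le_one hn hk (Ne.symm (mem_others.mp hv)) _)
    _ = 1 := sum_linkProb hn hk u _

lemma recip_nonneg (r : Node n k → ℝ) (u : Node n k) : 0 ≤ recip n k r u :=
  sum_nonneg fun _ _ => mul_nonneg (linkProb_nonneg _ _ _) (linkProb_nonneg _ _ _)

lemma linkDist_nonneg (u : Node n k) (s : ℝ) : 0 ≤ linkDist n k u s :=
  sum_nonneg fun _ _ => mul_nonneg (linkProb_nonneg _ _ _) (Nat.cast_nonneg _)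

lemma linkDist_le (hn : 2 ≤ n) (hk : 1 ≤ k) (u : Node n k) (s : ℝ) :
    linkDist n k u s ≤ k * (n / 2 : ℝ) := by
  calc linkDist n k u s ≤ ∑ v ∈ others n k u, linkProb n k u v s * (k * (n / 2) : ℕ) :=
        sum_le_sum fun v _ => by gcongr; exacts [linkProb_nonneg _ _ _, dM_le u v]
    _ ≤ k * (n / 2 : ℝ) := by
        rw [← sum_mul, sum_linkProb hn hk, one_mul, Nat.cast_mul]
        gcongr
        exact Nat.cast_div_le.trans (by norm_num)

lemma sum_linkProb_mul_rpow (u : Node n k) (s b : ℝ) :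
    ∑ v ∈ others n k u, linkProb n k u v s * (dM n k u v : ℝ) ^ b =
      (∑ v ∈ others n k u, (dM n k u v : ℝ) ^ (b - s)) / cnorm n k u s := by
  rw [sum_div]
  refine sum_congr rfl fun v hv => ?_
  have hd : (0 : ℝ) < dM n k u v := by exact_mod_cast one_le_dM (mem_others.mp hv)
  rw [linkProb, div_mul_eq_mul_div, ← Real.rpow_add hd, neg_add_eq_sub]

lemma linkDist_eq (u : Node n k) (s : ℝ) :
    linkDist n k u s = (∑ v ∈ others n k u, (dM n k u v : ℝ) ^ (1 - s)) / cnorm n k u s := by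
  rw [← sum_linkProb_mul_rpow]
  exact sum_congr rfl fun v _ => by rw [Real.rpow_one]

def CountLowerBound (n k : ℕ) (ξ : ℝ) (u : Node n k) : Prop :=
  ∀ j, 1 ≤ j → j ≤ n / 2 → ξ * (j : ℝ) ^ (k - 1) ≤ countAt n k u j

def CountUpperBound (n k : ℕ) (ξ : ℝ) (u : Node n k) : Prop :=
  ∀ j ∈ Icc 1 (k * (n / 2)), (countAt n k u j : ℝ) ≤ ξ * (j : ℝ) ^ (k - 1)

variable {ξ γ t : ℝ}

lemma CountUpperBound.sum_rpow_dM_le {u : Node n k} (hu : CountUpperBound n k ξ u) (hk : 1 ≤ k)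
    (hξ : 0 ≤ ξ) {a b : ℝ} (hab : a + (k - 1) ≤ b) :
    ∑ v ∈ others n k u, (dM n k u v : ℝ) ^ a ≤ ξ * ∑ j ∈ Icc 1 (k * (n / 2)), (j : ℝ) ^ b := by
  rw [sum_others_eq_sum_countAt u (fun j => (j : ℝ) ^ a), mul_sum]
  refine sum_le_sum fun j hj => ?_
  have hj : (1 : ℝ) ≤ j := by exact_mod_cast (mem_Icc.mp hj).1
  calc (countAt n k u j : ℝ) * (j : ℝ) ^ a ≤ ξ * (j : ℝ) ^ (k - 1) * (j : ℝ) ^ a := by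
        gcongr; exact hu j ‹_›
    _ = ξ * (j : ℝ) ^ (a + (k - 1)) := by
        rw [Real.rpow_add (by linarith), ← Real.rpow_natCast, Nat.cast_sub hk]
        push_cast; ring
    _ ≤ ξ * (j : ℝ) ^ b := by gcongr

lemma sum_Icc_countAt_le_cnorm {m : ℕ} (hm : m ≤ k * (n / 2)) (u : Node n k) (t : ℝ) :
    ∑ j ∈ Icc 1 m, (countAt n k u j : ℝ) * (j : ℝ) ^ (-t) ≤ cnorm n k u t := by
  rw [cnorm, sum_others_eq_sum_countAt u (fun j => (j : ℝ) ^ (-t))]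
  exact sum_le_sum_of_subset_of_nonneg (Icc_subset_Icc_right hm) fun _ _ _ => by positivity

lemma CountLowerBound.le_cnorm {u : Node n k} (hu : CountLowerBound n k ξ u) (hn : 2 ≤ n)
    (hk : 1 ≤ k) (t : ℝ) : ξ ≤ cnorm n k u t := by
  have h := sum_Icc_countAt_le_cnorm (Nat.mul_le_mul hk (by omega : 1 ≤ n / 2)) u t
  simp only [Icc_self, sum_singleton, Nat.cast_one, Real.one_rpow, mul_one] at h
  simpa using (hu 1 le_rfl (by omega)).trans h

lemma CountLowerBound.mul_rpow_div_four_le_cnorm {u : Node n k} (hu : CountLowerBound n k ξ u)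
    (hn : 2 ≤ n) (hk : 1 ≤ k) (hξ : 0 ≤ ξ) (hγ0 : 0 < γ) (hγ1 : γ ≤ 1) (ht : t ≤ k - γ) :
    ξ * (n : ℝ) ^ γ / 4 ≤ cnorm n k u t := by
  set M := n / 2
  have hM : (1 : ℝ) ≤ M := by exact_mod_cast (by omega : 1 ≤ n / 2)
  have hterm : ∀ j ∈ Icc 1 M, ξ * (M : ℝ) ^ (γ - 1) ≤ countAt n k u j * (j : ℝ) ^ (-t) := by
    intro j hj
    obtain ⟨hj1, hjM⟩ := mem_Icc.mp hj
    have hj : (1 : ℝ) ≤ j := by exact_mod_cast hj1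
    calc ξ * (M : ℝ) ^ (γ - 1) ≤ ξ * (j : ℝ) ^ (γ - 1) := by
          have hjM : (j : ℝ) ≤ M := by exact_mod_cast hjM
          exact mul_le_mul_of_nonneg_left
            (Real.rpow_le_rpow_of_nonpos (by linarith) hjM (by linarith)) hξ
      _ ≤ ξ * ((j : ℝ) ^ (k - 1) * (j : ℝ) ^ (-t)) := by
          gcongr
          rw [← Real.rpow_natCast, ← Real.rpow_add (by linarith)]
          apply Real.rpow_le_rpow_of_exponent_le hj
          push_cast [Nat.cast_sub hk]
          linarith
      _ ≤ countAt n k u j * (j : ℝ) ^ (-t) := by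
          rw [← mul_assoc]; gcongr; exact hu j hj1 hjM
  have hnM : (n : ℝ) ^ γ / 4 ≤ (M : ℝ) ^ γ := by
    have h4 : (4 : ℝ) ^ γ ≤ 4 := by
      simpa using Real.rpow_le_rpow_of_exponent_le (by norm_num : (1 : ℝ) ≤ 4) hγ1
    calc (n : ℝ) ^ γ / 4 ≤ (4 * M : ℝ) ^ γ / 4 := by
          gcongr; exact_mod_cast (by omega : n ≤ 4 * (n / 2))
      _ = (4 : ℝ) ^ γ / 4 * (M : ℝ) ^ γ := by rw [Real.mul_rpow (by norm_num) (by linarith)]; ring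
      _ ≤ (M : ℝ) ^ γ := mul_le_of_le_one_left (by positivity) ((div_le_one₀ (by norm_num)).2 h4)
  calc ξ * (n : ℝ) ^ γ / 4 ≤ ξ * (M : ℝ) ^ γ := by rw [mul_div_assoc]; gcongr
    _ = ∑ j ∈ Icc 1 M, ξ * (M : ℝ) ^ (γ - 1) := by
        rw [sum_const, Nat.card_Icc, Nat.add_sub_cancel, nsmul_eq_mul,
          Real.rpow_sub_one (by linarith)]
        field_simp
    _ ≤ ∑ j ∈ Icc 1 M, (countAt n k u j : ℝ) * (j : ℝ) ^ (-t) := sum_le_sum hterm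
    _ ≤ cnorm n k u t := sum_Icc_countAt_le_cnorm (Nat.le_mul_of_pos_left _ hk) u t

lemma linkProb_le_of_le_sub_or_le (hn : 2 ≤ n) (hk : 1 ≤ k) (hξ : 0 < ξ) {u v : Node n k}
    (huv : u ≠ v) (hv : CountLowerBound n k ξ v) (hγ0 : 0 < γ) (hγ1 : γ ≤ 1) (ht0 : 0 ≤ t)
    (ht : t ≤ k - γ ∨ k ≤ t) :
    linkProb n k v u t ≤ 4 / (ξ * (n : ℝ) ^ γ) + (dM n k u v : ℝ) ^ (-(k : ℝ)) / ξ := by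
  have hd : (1 : ℝ) ≤ dM n k v u := by exact_mod_cast one_le_dM huv
  have hc := cnorm_pos hn hk v t
  rcases ht with ht | ht
  · have hlow := hv.mul_rpow_div_four_le_cnorm hn hk hξ.le hγ0 hγ1 ht
    calc linkProb n k v u t ≤ 1 / cnorm n k v t :=
          div_le_div_of_nonneg_right (Real.rpow_le_one_of_one_le_of_nonpos hd (by linarith)) hc.le
      _ ≤ 4 / (ξ * (n : ℝ) ^ γ) := by
          rw [div_le_div_iff₀ hc (by positivity)]; linarith
      _ ≤ _ := le_add_of_nonneg_right (by positivity)
  · calc linkProb n k v u t ≤ (dM n k v u : ℝ) ^ (-(k : ℝ)) / ξ :=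
          div_le_div₀ (by positivity) (Real.rpow_le_rpow_of_exponent_le hd (by linarith)) hξ
            (hv.le_cnorm hn hk t)
      _ ≤ _ := by rw [dM_comm]; exact le_add_of_nonneg_left (by positivity)

lemma recip_le_add_sum_rpow_dM (hn : 2 ≤ n) (hk : 1 ≤ k) (hξ : 0 < ξ)
    (hlow : ∀ v, CountLowerBound n k ξ v) (hγ0 : 0 < γ) (hγ1 : γ ≤ 1) {r : Node n k → ℝ}
    (hr : ∀ v, 0 ≤ r v ∧ (r v ≤ k - γ ∨ k ≤ r v)) (u : Node n k) :
    recip n k r u ≤ 4 / (ξ * (n : ℝ) ^ γ) +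
      (∑ v ∈ others n k u, (dM n k u v : ℝ) ^ (-(k : ℝ) - r u)) / (cnorm n k u (r u) * ξ) := by
  calc recip n k r u ≤ ∑ v ∈ others n k u, linkProb n k u v (r u) *
        (4 / (ξ * (n : ℝ) ^ γ) + (dM n k u v : ℝ) ^ (-(k : ℝ)) / ξ) :=
        sum_le_sum fun v hv => mul_le_mul_of_nonneg_left
          (linkProb_le_of_le_sub_or_le hn hk hξ (Ne.symm (mem_others.mp hv)) (hlow v) hγ0 hγ1
            (hr v).1 (hr v).2) (linkProb_nonneg _ _ _)
    _ = _ := by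
        simp only [mul_add, sum_add_distrib, ← sum_mul, sum_linkProb hn hk, one_mul,
          mul_div_assoc', ← sum_div, sum_linkProb_mul_rpow, div_div]

lemma payoff_le_add_sum_rpow_dM (hn : 2 ≤ n) (hk : 1 ≤ k) (hξ : 0 < ξ)
    (hlow : ∀ v, CountLowerBound n k ξ v) (hγ0 : 0 < γ) (hγ1 : γ ≤ 1) {r : Node n k → ℝ}
    (hr : ∀ v, 0 ≤ r v ∧ (r v ≤ k - γ ∨ k ≤ r v)) (u : Node n k) :
    payoff n k r u ≤ 2 * k / ξ * (n : ℝ) ^ (1 - γ) + k * (n / 2) *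
      ((∑ v ∈ others n k u, (dM n k u v : ℝ) ^ (-(k : ℝ) - r u)) / (cnorm n k u (r u) * ξ)) := by
  have hn0 : (0 : ℝ) < n := by positivity
  calc payoff n k r u ≤ k * (n / 2 : ℝ) * recip n k r u :=
        mul_le_mul_of_nonneg_right (linkDist_le hn hk u _) (recip_nonneg r u)
    _ ≤ k * (n / 2 : ℝ) * (4 / (ξ * (n : ℝ) ^ γ) +
      (∑ v ∈ others n k u, (dM n k u v : ℝ) ^ (-(k : ℝ) - r u)) / (cnorm n k u (r u) * ξ)) :=
        mul_le_mul_of_nonneg_left (recip_le_add_sum_rpow_dM hn hk hξ hlow hγ0 hγ1 hr u)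
          (by positivity)
    _ = _ := by
        rw [Real.rpow_sub hn0, Real.rpow_one]
        field_simp
        ring

variable {ξp : ℝ} {r : Node n k → ℝ} {u : Node n k}

lemma payoff_le_of_eq_zero (hn : 2 ≤ n) (hk : 1 ≤ k) (hξ : 0 < ξ)
    (hlow : ∀ v, CountLowerBound n k ξ v) (hξp : 0 ≤ ξp) (hup : CountUpperBound n k ξp u)
    (hγ0 : 0 < γ) (hγ : γ ≤ 1 / 2) (hr : ∀ v, 0 ≤ r v ∧ (r v ≤ k - γ ∨ k ≤ r v)) (hu : r u = 0) :
    payoff n k r u ≤ (2 * k / ξ + k ^ 2 * ξp / (γ * ξ)) * (n : ℝ) ^ (1 - γ) := by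
  have hn1 : (1 : ℝ) ≤ n := by exact_mod_cast (by omega : 1 ≤ n)
  have hsum :
      ∑ v ∈ others n k u, (dM n k u v : ℝ) ^ (-(k : ℝ) - r u) ≤ ξp * (k * (n : ℝ) ^ γ / γ) :=
    calc _ ≤ ξp * ∑ j ∈ Icc 1 (k * (n / 2)), (j : ℝ) ^ (γ - 1) :=
          hup.sum_rpow_dM_le hk hξp (by rw [hu]; linarith)
      _ ≤ ξp * (k * (n : ℝ) ^ γ / γ) := by
          gcongr
          exact (sum_Icc_rpow_sub_one_le hγ0 (by linarith) _).trans
            (by gcongr; exact cast_mul_half_rpow_le hk hγ0.le (by linarith))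
  have hc : (n : ℝ) ^ k / 2 ≤ cnorm n k u (r u) := by
    rw [hu, cnorm_zero]
    have : (2 : ℝ) ≤ (n : ℝ) ^ k := le_trans (by exact_mod_cast hn) (le_self_pow₀ hn1 (by omega))
    linarith
  calc payoff n k r u ≤ 2 * k / ξ * (n : ℝ) ^ (1 - γ) + k * (n / 2) *
        (ξp * (k * (n : ℝ) ^ γ / γ) / ((n : ℝ) ^ k / 2 * ξ)) := by
        grw [payoff_le_add_sum_rpow_dM hn hk hξ hlow hγ0 (by linarith) hr u, hsum, ← hc]
        exact (mul_pos (cnorm_pos hn hk u _) hξ).le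
    _ = 2 * k / ξ * (n : ℝ) ^ (1 - γ) +
          k ^ 2 * ξp / (γ * ξ) * (n * (n : ℝ) ^ γ / (n : ℝ) ^ k) := by
        field_simp
    _ ≤ _ := by
        rw [add_mul]
        gcongr
        exact mul_rpow_div_pow_le_rpow hn1 hk hγ

lemma payoff_le_of_mem_Icc (hn : 2 ≤ n) (hk : 1 ≤ k) (hξ : 0 < ξ)
    (hlow : ∀ v, CountLowerBound n k ξ v) (hξp : 0 ≤ ξp) (hup : CountUpperBound n k ξp u)
    (hγ0 : 0 < γ) (hγ1 : γ ≤ 1) (hr : ∀ v, 0 ≤ r v ∧ (r v ≤ k - γ ∨ k ≤ r v))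
    (hu : γ ≤ r u ∧ r u ≤ k - γ) :
    payoff n k r u ≤ (2 * k / ξ + 4 * k * ξp / (γ * ξ ^ 2)) * (n : ℝ) ^ (1 - γ) := by
  have hn0 : (0 : ℝ) < n := by positivity
  have hsum : ∑ v ∈ others n k u, (dM n k u v : ℝ) ^ (-(k : ℝ) - r u) ≤ ξp * (2 / γ) :=
    calc _ ≤ ξp * ∑ j ∈ Icc 1 (k * (n / 2)), (j : ℝ) ^ (-γ - 1) :=
          hup.sum_rpow_dM_le hk hξp (by linarith)
      _ ≤ ξp * (2 / γ) := by
          gcongr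
          refine (sum_Icc_rpow_neg_sub_one_le hγ0 _).trans ?_
          rw [show (2 : ℝ) / γ = 1 / γ + 1 / γ by ring]
          gcongr
          exact one_le_one_div hγ0 hγ1
  have hc := (hlow u).mul_rpow_div_four_le_cnorm hn hk hξ.le hγ0 hγ1 hu.2
  calc payoff n k r u ≤ 2 * k / ξ * (n : ℝ) ^ (1 - γ) + k * (n / 2) *
        (ξp * (2 / γ) / (ξ * (n : ℝ) ^ γ / 4 * ξ)) := by
        grw [payoff_le_add_sum_rpow_dM hn hk hξ hlow hγ0 hγ1 hr u, hsum, ← hc]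
        exact (mul_pos (cnorm_pos hn hk u _) hξ).le
    _ = (2 * k / ξ + 4 * k * ξp / (γ * ξ ^ 2)) * (n : ℝ) ^ (1 - γ) := by
        rw [Real.rpow_sub hn0, Real.rpow_one]
        field_simp

lemma payoff_le_of_add_le (hn : 2 ≤ n) (hk : 1 ≤ k) (hξ : 0 < ξ) (hlow : CountLowerBound n k ξ u)
    (hξp : 0 ≤ ξp) (hup : CountUpperBound n k ξp u) (hγ0 : 0 < γ) (hγ : γ ≤ 1 / 2)
    (hu : k + γ ≤ r u) :
    payoff n k r u ≤ 2 * k * ξp / ξ * (n : ℝ) ^ (1 - γ) := by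
  have hsum :
      ∑ v ∈ others n k u, (dM n k u v : ℝ) ^ (1 - r u) ≤ ξp * (2 * k * (n : ℝ) ^ (1 - γ)) :=
    calc _ ≤ ξp * ∑ j ∈ Icc 1 (k * (n / 2)), (j : ℝ) ^ ((1 - γ) - 1) :=
          hup.sum_rpow_dM_le hk hξp (by linarith)
      _ ≤ ξp * (2 * k * (n : ℝ) ^ (1 - γ)) := by
          gcongr
          refine (sum_Icc_rpow_sub_one_le (by linarith) (by linarith) _).trans ?_
          rw [div_le_iff₀ (by linarith)]
          calc _ ≤ k * (n : ℝ) ^ (1 - γ) := cast_mul_half_rpow_le hk (by linarith) (by linarith)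
            _ ≤ 2 * k * (n : ℝ) ^ (1 - γ) * (1 - γ) := by
                have : 0 ≤ k * (n : ℝ) ^ (1 - γ) := by positivity
                nlinarith
  calc payoff n k r u ≤ linkDist n k u (r u) :=
        mul_le_of_le_one_right (linkDist_nonneg u _) (recip_le_one hn hk r u)
    _ ≤ ξp * (2 * k * (n : ℝ) ^ (1 - γ)) / ξ := by
        rw [linkDist_eq]
        exact div_le_div₀ (by positivity) hsum hξ (hlow.le_cnorm hn hk _)
    _ = 2 * k * ξp / ξ * (n : ℝ) ^ (1 - γ) := by ring

lemma InSigma.nonneg {s : ℝ} (hs : InSigma γ s) (hγ : 0 ≤ γ) : 0 ≤ s := by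
  obtain ⟨m, rfl⟩ := hs
  positivity

lemma InSigma.add_le_or_le {s : ℝ} (hs : InSigma γ s) (hγ : 0 ≤ γ) (a : ℕ) :
    s + γ ≤ a * γ ∨ a * γ ≤ s := by
  obtain ⟨m, rfl⟩ := hs
  rcases lt_or_ge m a with h | h
  · left
    have : (m : ℝ) + 1 ≤ a := by exact_mod_cast h
    nlinarith
  · right
    have : (a : ℝ) ≤ m := by exact_mod_cast h
    nlinarith

lemma InSigma.le_sub_or_le {g : ℕ} (hg : g ≠ 0) {s : ℝ} (hs : InSigma (g : ℝ)⁻¹ s) (k : ℕ) :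
    s ≤ k - (g : ℝ)⁻¹ ∨ k ≤ s := by
  have hk : ((k * g : ℕ) : ℝ) * (g : ℝ)⁻¹ = k := by field_simp; push_cast; ring
  rcases hs.add_le_or_le (by positivity) (k * g) with h | h
  · left; linarith
  · right; linarith

lemma InSigma.eq_zero_or_mem_Icc_or_add_le {g : ℕ} (hg : g ≠ 0) {s : ℝ}
    (hs : InSigma (g : ℝ)⁻¹ s) {k : ℕ} (hsk : s ≠ k) :
    s = 0 ∨ ((g : ℝ)⁻¹ ≤ s ∧ s ≤ k - (g : ℝ)⁻¹) ∨ k + (g : ℝ)⁻¹ ≤ s := by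
  have hγ : (0 : ℝ) ≤ (g : ℝ)⁻¹ := by positivity
  have hk : ((k * g + 1 : ℕ) : ℝ) * (g : ℝ)⁻¹ = k + (g : ℝ)⁻¹ := by field_simp; push_cast; ring
  rcases hs.add_le_or_le hγ 1 with h1 | h1
  · left; linarith [hs.nonneg hγ]
  rcases hs.le_sub_or_le hg k with h2 | h2
  · right; left; constructor <;> linarith
  rcases hs.add_le_or_le hγ (k * g + 1) with h3 | h3
  · exact absurd (le_antisymm (by linarith) h2) hsk
  · right; right; linarith

lemma countAt_le_pow (u : Node n k) (j : ℕ) : countAt n k u j ≤ n ^ k :=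
  (card_filter_le _ _).trans (by simp)

lemma payoff_constants_le (hk : 1 ≤ k) (hξ : 0 < ξ) (hξp : ξ ≤ ξp) (hξk : ξ ≤ 2 ^ k)
    (hγ0 : 0 < γ) (hγ : γ ≤ 1 / 2) :
    2 * k / ξ + k ^ 2 * ξp / (γ * ξ) + 4 * k * ξp / (γ * ξ ^ 2) + 2 * k * ξp / ξ ≤
      2 ^ (k + 3) * k ^ 2 * ξp ^ 2 / (γ * ξ ^ 3) := by
  have hk : (1 : ℝ) ≤ k := by exact_mod_cast hk
  have hP : (1 : ℝ) ≤ 2 ^ k := one_le_pow₀ one_le_two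
  have hξp0 : 0 < ξp := by linarith
  have hkk : (k : ℝ) ≤ k ^ 2 := by nlinarith
  have hξξ : ξ * ξ ≤ 2 ^ k * ξp := by gcongr
  rw [le_div_iff₀ (by positivity)]
  have e : (2 * k / ξ + k ^ 2 * ξp / (γ * ξ) + 4 * k * ξp / (γ * ξ ^ 2) + 2 * k * ξp / ξ) *
      (γ * ξ ^ 3) = 2 * k * γ * (ξ * ξ) + k ^ 2 * ξp * (ξ * ξ) + 4 * k * ξp * ξ +
        2 * k * ξp * γ * (ξ * ξ) := by
    field_simp
  rw [e, pow_add]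
  have t1 : 2 * k * γ * (ξ * ξ) ≤ 2 * k ^ 2 * (1 / 2) * (ξp * ξp) := by gcongr
  have t2 : k ^ 2 * ξp * (ξ * ξ) ≤ k ^ 2 * ξp * (2 ^ k * ξp) := by gcongr
  have t3 : 4 * k * ξp * ξ ≤ 4 * k ^ 2 * ξp * ξp := by gcongr
  have t4 : 2 * k * ξp * γ * (ξ * ξ) ≤ 2 * k ^ 2 * ξp * (1 / 2) * (2 ^ k * ξp) := by gcongr
  nlinarith [mul_le_mul_of_nonneg_left hP (by positivity : (0 : ℝ) ≤ k ^ 2 * ξp ^ 2)]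

theorem payoff_le_of_ne (hn : 2 ≤ n) (hk : 1 ≤ k) {g : ℕ} (hg : 2 ≤ g) (hξ : 0 < ξ)
    (hlow : ∀ v, CountLowerBound n k ξ v) (hξp : ξ ≤ ξp) (hξk : ξ ≤ 2 ^ k)
    (hup : CountUpperBound n k ξp u) (hr : ValidProfile n k (g : ℝ)⁻¹ r) (hu : r u ≠ k) :
    payoff n k r u ≤
      2 ^ (k + 3) * k ^ 2 * ξp ^ 2 / ((g : ℝ)⁻¹ * ξ ^ 3) * (n : ℝ) ^ (1 - (g : ℝ)⁻¹) := by
  set γ : ℝ := (g : ℝ)⁻¹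
  have hγ0 : 0 < γ := by positivity
  have hγ : γ ≤ 1 / 2 := by
    rw [one_div]; exact inv_anti₀ two_pos (by exact_mod_cast hg)
  have hξp0 : 0 ≤ ξp := by linarith
  have hgap : ∀ v, 0 ≤ r v ∧ (r v ≤ k - γ ∨ k ≤ r v) :=
    fun v => ⟨(hr v).nonneg hγ0.le, (hr v).le_sub_or_le (by omega) k⟩
  have hC := payoff_constants_le hk hξ hξp hξk hγ0 hγ
  have h1 : 0 ≤ 2 * k / ξ := by positivity
  have h2 : 0 ≤ k ^ 2 * ξp / (γ * ξ) := by positivity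
  have h3 : 0 ≤ 4 * k * ξp / (γ * ξ ^ 2) := by positivity
  have h4 : 0 ≤ 2 * k * ξp / ξ := by positivity
  have hX : (0 : ℝ) ≤ (n : ℝ) ^ (1 - γ) := by positivity
  rcases (hr u).eq_zero_or_mem_Icc_or_add_le (by omega) hu with h | h | h
  · refine (payoff_le_of_eq_zero hn hk hξ hlow hξp0 hup hγ0 hγ hgap h).trans ?_
    exact mul_le_mul_of_nonneg_right (by linarith) hX
  · refine (payoff_le_of_mem_Icc hn hk hξ hlow hξp0 hup hγ0 (by linarith) hgap h).trans ?_
    exact mul_le_mul_of_nonneg_right (by linarith) hX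
  · refine (payoff_le_of_add_le hn hk hξ (hlow u) hξp0 hup hγ0 hγ h).trans ?_
    exact mul_le_mul_of_nonneg_right (by linarith) hX

end DRB

theorem low_order_payoff_general (k g : ℕ) (hk : 1 ≤ k) (hg : 2 ≤ g)
    (ξm ξp : ℝ) (hξm : 0 < ξm)
    (hb1 : ∀ n : ℕ, ∀ u : DRB.Node n k, ∀ j : ℕ, 1 ≤ j → j ≤ n / 2 →
      ξm * (j : ℝ) ^ (k - 1) ≤ (DRB.countAt n k u j : ℝ) ∧
        (DRB.countAt n k u j : ℝ) ≤ ξp * (j : ℝ) ^ (k - 1))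
    (hb2 : ∀ n : ℕ, ∀ u : DRB.Node n k, ∀ j : ℕ, n / 2 < j → j ≤ k * (n / 2) →
      1 ≤ DRB.countAt n k u j ∧
        (DRB.countAt n k u j : ℝ) ≤ ξp * (j : ℝ) ^ (k - 1)) :
    ∀ n : ℕ, max (Real.exp 4) (2 * (k : ℝ)) ≤ (n : ℝ) →
      ∀ r : DRB.Node n k → ℝ, DRB.ValidProfile n k (g : ℝ)⁻¹ r →
        ∀ u : DRB.Node n k, r u ≠ (k : ℝ) →
          DRB.payoff n k r u ≤
            (ξp ^ 2 * 2 ^ (2 * k + 7) * (k : ℝ) ^ (k + 4) / ((g : ℝ)⁻¹ * ξm ^ 3)) *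
              (n : ℝ) ^ ((1 : ℝ) - (g : ℝ)⁻¹) := by
  intro n hn r hr u hru
  have hn2 : 2 ≤ n := by
    have : (2 : ℝ) ≤ n := by linarith [le_max_left (Real.exp 4) (2 * k), Real.add_one_le_exp 4]
    exact_mod_cast this
  have hlow : ∀ v, DRB.CountLowerBound n k ξm v := fun v j h1 h2 => (hb1 n v j h1 h2).1
  have hup : DRB.CountUpperBound n k ξp u := fun j hj => by
    obtain ⟨h1, h2⟩ := mem_Icc.mp hj
    rcases le_or_gt j (n / 2) with h | h
    exacts [(hb1 n u j h1 h).2, (hb2 n u j h h2).2]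
  have hξ : ξm ≤ ξp := by
    have h := hb1 n u 1 le_rfl (by omega)
    simpa using h.1.trans h.2
  -- `hb1` also constrains the grid of side `2`, which has only `2 ^ k` nodes
  have hξk : ξm ≤ 2 ^ k := by
    have h := (hb1 2 (fun _ => 0) 1 le_rfl le_rfl).1.trans
      (Nat.cast_le.mpr (DRB.countAt_le_pow (n := 2) (k := k) (fun _ => 0) 1))
    simpa using h
  refine (DRB.payoff_le_of_ne hn2 hk hg hξm hlow hξ hξk hup hr hru).trans ?_
  gcongr ?_ * _
  rw [mul_comm _ (ξp ^ 2), mul_assoc]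
  gcongr <;> first | exact one_le_two | omega | exact_mod_cast hk

/-- Low-order payoff bound for strategies `≠ k`. With the counting
constants `ξ_k^-, ξ_k^+` for nodes at each distance level, for all
`n ≥ max(e^4, 2k)`, any node playing `r_u ≠ k` in any valid profile has payoff
at most `κ · n^{1-γ}`, with
`κ = (ξ_k^+)^2 · 2^{2k+7} · k^{k+4} / (γ·(ξ_k^-)^3)`. -/
theorem low_order_payoff (k g : ℕ) (hk : 1 ≤ k) (hg : 2 ≤ g)
    (ξm ξp : ℝ) (hξm : 0 < ξm) (hξp : 0 < ξp)
    (hb1 : ∀ n : ℕ, ∀ u : DRB.Node n k, ∀ j : ℕ, 1 ≤ j → j ≤ n / 2 →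
      ξm * (j : ℝ) ^ (k - 1) ≤ (DRB.countAt n k u j : ℝ) ∧
        (DRB.countAt n k u j : ℝ) ≤ ξp * (j : ℝ) ^ (k - 1))
    (hb2 : ∀ n : ℕ, ∀ u : DRB.Node n k, ∀ j : ℕ, n / 2 < j → j ≤ k * (n / 2) →
      1 ≤ DRB.countAt n k u j ∧
        (DRB.countAt n k u j : ℝ) ≤ ξp * (j : ℝ) ^ (k - 1)) :
    ∀ n : ℕ, max (Real.exp 4) (2 * (k : ℝ)) ≤ (n : ℝ) →
      ∀ r : DRB.Node n k → ℝ, DRB.ValidProfile n k (g : ℝ)⁻¹ r →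
        ∀ u : DRB.Node n k, r u ≠ (k : ℝ) →
          DRB.payoff n k r u ≤
            (ξp ^ 2 * 2 ^ (2 * k + 7) * (k : ℝ) ^ (k + 4) / ((g : ℝ)⁻¹ * ξm ^ 3)) *
              (n : ℝ) ^ ((1 : ℝ) - (g : ℝ)⁻¹) :=
  low_order_payoff_general k g hk hg ξm ξp hξm hb1 hb2
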